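/- Let H be a finite graph with n = |V(H)| vertices and m = |E(H)| edges, and let Y be the matrix of the map D for the pair (C'(H), C(V(H))) (an n×m matrix). Then Mesh(C'(H),C(V(H))) = Id_m + YᵀY, Δ(H) = Y·Yᵀ, and U^n · det(U·Id_m − (Mesh(C'(H),C(V(H))) − Id_m)) = U^m · det(U·Id_n − Δ(H)) as polynomials in U; in particular, Δ(H) has the same non-vanishing eigenvalues, counted with multiplicities, as Mesh(C'(H),C(V(H))) − Id_m. -/

import Mathlib

open scoped Classical
open Polynomial BigOperators Matrix

namespace Mesh

variable {V E : Type}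

/-- One undirected step between vertices along an edge in `S`. -/
def Step (src tgt : E → V) (S : Finset E) (a b : V) : Prop :=
  ∃ e ∈ S, (src e = a ∧ tgt e = b) ∨ (src e = b ∧ tgt e = a)

/-- Reachability within the subgraph with edge set `S`. -/
def Reach (src tgt : E → V) (S : Finset E) (a b : V) : Prop :=
  Relation.EqvGen (Step src tgt S) a b

/-- The spanning subgraph with edge set `S` is connected. -/
def ConnectedVia (src tgt : E → V) (S : Finset E) : Prop :=
  ∀ a b : V, Reach src tgt S a b

/-- `S` is the edge set of a spanning tree: connected and `|V| - 1` edges. -/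
def IsSpanningTree [Fintype V] (src tgt : E → V) (S : Finset E) : Prop :=
  ConnectedVia src tgt S ∧ S.card + 1 = Fintype.card V

/-- Number of spanning trees of the multigraph `(V, E, src, tgt)`. -/
noncomputable def ST [Fintype V] (src tgt : E → V) : ℕ :=
  Nat.card {S : Finset E // IsSpanningTree src tgt S}

/-- `ST_j(G, T0)`: number of spanning trees having exactly `j` edges outside `T0`. -/
noncomputable def STj [Fintype V] [DecidableEq E] (src tgt : E → V) (T0 : Finset E) (j : ℕ) : ℕ :=
  Nat.card {S : Finset E // IsSpanningTree src tgt S ∧ (S \ T0).card = j}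

/-- Boundary of an integral 1-chain. -/
def bdry [Fintype E] [DecidableEq V] (src tgt : E → V) (c : E → ℤ) : V → ℤ :=
  fun v => ∑ e, c e * ((if tgt e = v then 1 else 0) - (if src e = v then 1 else 0))

/-- The fundamental cycle `Z[j] = e_j + D(e_j)`. -/
def Zchain [DecidableEq E] (T0 : Finset E) (D : {e : E // e ∉ T0} → E → ℤ)
    (j : {e : E // e ∉ T0}) : E → ℤ :=
  fun e => (if e = (j : E) then 1 else 0) + D j e

/-- `D` assigns to each non-tree edge the (unique) chain supported in the tree `T0`
making `Z[j] = e_j + D(e_j)` a cycle; for a spanning tree this characterizes the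
signed sum of edges of the tree path from the head to the tail of `e_j`. -/
def IsPathData [Fintype V] [Fintype E] [DecidableEq V] [DecidableEq E]
    (src tgt : E → V) (T0 : Finset E) (D : {e : E // e ∉ T0} → E → ℤ) : Prop :=
  (∀ j f, D j f ≠ 0 → f ∈ T0) ∧ ∀ j, bdry src tgt (Zchain T0 D j) = 0

/-- The mesh matrix `Mesh(G,T0)` with entries `⟨Z[j₁], Z[j₂]⟩`. -/
noncomputable def MeshM [Fintype E] [DecidableEq E] (T0 : Finset E)
    (D : {e : E // e ∉ T0} → E → ℤ) :
    Matrix {e : E // e ∉ T0} {e : E // e ∉ T0} ℤ :=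
  Matrix.of fun j₁ j₂ => ∑ e, Zchain T0 D j₁ e * Zchain T0 D j₂ e

/-- The matrix `Y` of the map `D` in the edge bases. -/
noncomputable def Ymat [DecidableEq E] (T0 : Finset E) (D : {e : E // e ∉ T0} → E → ℤ) :
    Matrix {f : E // f ∈ T0} {e : E // e ∉ T0} ℤ :=
  Matrix.of fun k j => D j (k : E)

/-- The Kirchhoff Laplacian `Deg - Adj` of a multigraph. -/
noncomputable def LapDegAdj {V' E' : Type} [Fintype E'] [DecidableEq V'] (s t : E' → V') :
    Matrix V' V' ℤ :=
  Matrix.of fun a b =>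
    (if a = b then
        ((Finset.univ.filter fun e => s e = a).card + (Finset.univ.filter fun e => t e = a).card : ℤ)
      else 0)
    - ((Finset.univ.filter fun e => (s e = a ∧ t e = b) ∨ (s e = b ∧ t e = a)).card : ℤ)

/-- The incidence coefficient of vertex `v` in `∂e`. -/
def inc [DecidableEq V] (src tgt : E → V) (e : E) (v : V) : ℤ :=
  (if tgt e = v then 1 else 0) - (if src e = v then 1 else 0)

/-- Source map of the cone `C'(H)`: vertices `Option V` (with `none = W`),
edges `E ⊕ V` (`inl` the edges of `H`, `inr P` the cone edge `P → W`). -/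
def coneSrc (src : E → V) : E ⊕ V → Option V
  | Sum.inl e => some (src e)
  | Sum.inr p => some p

/-- Target map of the cone `C'(H)`. -/
def coneTgt (tgt : E → V) : E ⊕ V → Option V
  | Sum.inl e => some (tgt e)
  | Sum.inr _ => none

/-- The edge set of the cone subgraph `C(V(H))` of `C'(H)`. -/
noncomputable def coneTree (E V : Type) [Fintype E] [Fintype V] : Finset (E ⊕ V) :=
  Finset.univ.filter fun x => x.isRight = true

/-- The tree chain `D(e) = (Q → W) - (P → W)` for the pair `(C'(H), C(V(H)))`. -/
def coneD [DecidableEq V] [DecidableEq E] (src tgt : E → V) (e : E) : E ⊕ V → ℤ :=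
  fun x => (if x = Sum.inr (tgt e) then 1 else 0) - (if x = Sum.inr (src e) then 1 else 0)

/-- The boundary map as a homomorphism of abelian groups. -/
noncomputable def bdryHom [Fintype E] [DecidableEq V] (src tgt : E → V) :
    (E → ℤ) →+ (V → ℤ) where
  toFun := bdry src tgt
  map_zero' := by funext v; simp [bdry]
  map_add' := by
    intro a b
    funext v
    simp [bdry, add_mul, Finset.sum_add_distrib]

/-- `Π ∘ ∂*` : the composition of the coboundary with the identification `Π`. -/
noncomputable def cobdryHom (src tgt : E → V) : (V → ℤ) →+ (E → ℤ) where
  toFun := fun g e => g (tgt e) - g (src e)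
  map_zero' := by funext e; simp
  map_add' := by
    intro a b
    funext e
    simp only [Pi.add_apply]
    ring

/-- The reachability setoid of the spanning subgraph with edge set `F`. -/
def reachSetoid (src tgt : E → V) (F : Finset E) : Setoid V :=
  ⟨Relation.EqvGen (Step src tgt F), Relation.EqvGen.is_equivalence _⟩

/-- Number of connected components of the spanning subgraph with edge set `F`. -/
noncomputable def ncomp (src tgt : E → V) (F : Finset E) : ℕ :=
  Nat.card (Quotient (reachSetoid src tgt F))

/-- `F` is (the edge set of) a spanning forest. -/
def IsSpForest [Fintype V] (src tgt : E → V) (F : Finset E) : Prop :=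
  F.card + ncomp src tgt F = Fintype.card V

/-- `mult(F)`: the product of the numbers of vertices of the components of `F`. -/
noncomputable def multF (src tgt : E → V) (F : Finset E) : ℕ :=
  ∏ᶠ q : Quotient (reachSetoid src tgt F),
    Nat.card {v : V // Quotient.mk (reachSetoid src tgt F) v = q}

/-- `(F, R)` is a rooted spanning forest: `R` has exactly one root in each component. -/
def IsRootedSF [Fintype V] (src tgt : E → V) (F : Finset E) (R : Finset V) : Prop :=
  IsSpForest src tgt F ∧
    ∀ v : V, ∃! u : V, u ∈ R ∧ Relation.EqvGen (Step src tgt F) u v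

/-- The polynomial `ST(G,H)(X) = Σ_{j=0}^{N} (-1)^j ST_j(G,H) X^{N-j}`, `N = |E(G)-E(H)|`. -/
noncomputable def STpoly [Fintype V] [Fintype E] [DecidableEq E] (src tgt : E → V)
    (HE : Finset E) : Polynomial ℤ :=
  ∑ j ∈ Finset.range (HEᶜ.card + 1),
    Polynomial.C ((-1 : ℤ) ^ j * (STj src tgt HE j : ℤ)) * Polynomial.X ^ (HEᶜ.card - j)

/-- The vertex map of the contraction `G/e₀`: `src e₀` is identified with `tgt e₀`. -/
def contrV [DecidableEq V] (src tgt : E → V) (e0 : E) (h : src e0 ≠ tgt e0) (v : V) :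
    {w : V // w ≠ src e0} :=
  if hv : v = src e0 then ⟨tgt e0, Ne.symm h⟩ else ⟨v, hv⟩

/-- Source of a directed edge `(e, b)` (`b = true`: the chosen direction). -/
def dsrc (src tgt : E → V) (x : E × Bool) : V := if x.2 then src x.1 else tgt x.1

/-- Target of a directed edge `(e, b)`. -/
def dtgt (src tgt : E → V) (x : E × Bool) : V := if x.2 then tgt x.1 else src x.1

/-- A non-tree edge is of type 3 when its tree path has length ≥ 2. -/
noncomputable def Type3 [Fintype E] (T0 : Finset E) (D : {e : E // e ∉ T0} → E → ℤ)
    (j : {e : E // e ∉ T0}) : Prop :=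
  2 ≤ (Finset.univ.filter fun f => D j f ≠ 0).card


/-- The mesh matrix of the pair `(C'(H), C(V(H)))`, indexed by the edges of `H`. -/
noncomputable def coneMesh {V E : Type} [Fintype V] [Fintype E] [DecidableEq V] [DecidableEq E]
    (src tgt : E → V) : Matrix E E ℤ :=
  Matrix.of fun e₁ e₂ => ∑ x : E ⊕ V,
    ((if x = Sum.inl e₁ then 1 else 0) + coneD src tgt e₁ x) *
      ((if x = Sum.inl e₂ then 1 else 0) + coneD src tgt e₂ x)

/-- The matrix `Y` of the map `D` for the pair `(C'(H), C(V(H)))`, with the tree edges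
identified with the vertices of `H` and the non-tree edges with the edges of `H`. -/
noncomputable def coneY {V E : Type} [Fintype V] [Fintype E] [DecidableEq V] [DecidableEq E]
    (src tgt : E → V) : Matrix V E ℤ :=
  Matrix.of fun v e => coneD src tgt e (Sum.inr v)

end Mesh

/-! The fundamental cycle of an edge `e : P → Q` of `H` with respect to the cone tree is
`e + (Q → W) - (P → W)`, so the tree part of `Z[e]` is the column of the vertex–edge incidence
matrix at `e`: `Y` is the incidence matrix of `H`. Hence `Mesh - 1 = YᵀY` and `YYᵀ = Deg - Adj`,
and the characteristic polynomial identity is Sylvester's `X^n χ(YᵀY) = X^m χ(YYᵀ)`; away from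
`0` both sides have the same roots. -/

lemma Polynomial.isRoot_map_iff_of_X_pow_mul_eq {R K : Type*} [CommRing R] [Field K]
    (f : R →+* K) {p q : R[X]} {a b : ℕ} (h : X ^ a * p = X ^ b * q) {μ : K} (hμ : μ ≠ 0) :
    (p.map f).IsRoot μ ↔ (q.map f).IsRoot μ := by
  have h' := congrArg (eval₂ f μ) h
  simp only [eval₂_mul, eval₂_X_pow] at h'
  simp only [IsRoot, eval_map]
  constructor <;> intro h0 <;> simpa [h0, hμ] using h'.symm

lemma Matrix.mem_spectrum_map_iff_of_X_pow_mul_charpoly_eq {R K ι κ : Type*} [CommRing R]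
    [Field K] [Fintype ι] [Fintype κ] [DecidableEq ι] [DecidableEq κ] (f : R →+* K)
    {M : Matrix ι ι R} {N : Matrix κ κ R} {a b : ℕ}
    (h : X ^ a * M.charpoly = X ^ b * N.charpoly) {μ : K} (hμ : μ ≠ 0) :
    μ ∈ spectrum K (M.map f) ↔ μ ∈ spectrum K (N.map f) := by
  rw [mem_spectrum_iff_isRoot_charpoly, mem_spectrum_iff_isRoot_charpoly, charpoly_map,
    charpoly_map]
  exact Polynomial.isRoot_map_iff_of_X_pow_mul_eq f h hμ

namespace Mesh

section Cone

variable {V E : Type} [DecidableEq V] (src tgt : E → V)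

lemma inc_mul_inc {e : E} (he : src e ≠ tgt e) (a b : V) :
    inc src tgt e a * inc src tgt e b =
      (if a = b then (if src e = a then 1 else 0) + (if tgt e = a then 1 else 0) else 0)
        - (if (src e = a ∧ tgt e = b) ∨ (src e = b ∧ tgt e = a) then 1 else 0) := by
  unfold inc
  by_cases h1 : src e = a <;> by_cases h2 : tgt e = a <;>
    by_cases h3 : src e = b <;> by_cases h4 : tgt e = b <;> simp_all [eq_comm]

variable [DecidableEq E]

lemma coneD_inl (e e' : E) : coneD src tgt e (Sum.inl e') = 0 := by
  simp [coneD]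

lemma coneD_inr (e : E) (v : V) : coneD src tgt e (Sum.inr v) = inc src tgt e v := by
  simp [coneD, inc, eq_comm]

variable [Fintype V] [Fintype E]

lemma coneMesh_eq_one_add_transpose_mul :
    coneMesh src tgt = 1 + (coneY src tgt)ᵀ * coneY src tgt := by
  ext e₁ e₂
  simp only [coneMesh, coneY, Matrix.of_apply, Fintype.sum_sum_type, coneD_inl, coneD_inr,
    Matrix.add_apply, Matrix.one_apply, Matrix.mul_apply, Matrix.transpose_apply, Sum.inl.injEq,
    reduceCtorEq, if_false, add_zero, zero_add]
  congr 1
  simp [eq_comm]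

lemma coneY_mul_transpose (hloopfree : ∀ e : E, src e ≠ tgt e) :
    coneY src tgt * (coneY src tgt)ᵀ = LapDegAdj src tgt := by
  ext a b
  simp only [Matrix.mul_apply, Matrix.transpose_apply, coneY, Matrix.of_apply, coneD_inr,
    inc_mul_inc src tgt (hloopfree _), LapDegAdj, Finset.natCast_card_filter]
  split_ifs <;> simp [Finset.sum_sub_distrib, Finset.sum_add_distrib]

end Cone

/-- For a finite graph `H` with `n` vertices and `m` edges, with `Y`
the `n × m` matrix of `D` for `(C'(H), C(V(H)))`: `Mesh = Id + YᵀY`, `Δ(H) = Y·Yᵀ`, and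
`U^n · det(U·Id_m - (Mesh - Id_m)) = U^m · det(U·Id_n - Δ(H))`; in particular `Δ(H)` and
`Mesh - Id_m` have the same non-vanishing eigenvalues, with multiplicities. -/
theorem stmt7 {V E : Type} [Fintype V] [Fintype E] [DecidableEq V] [DecidableEq E]
    (src tgt : E → V) (hloopfree : ∀ e : E, src e ≠ tgt e)
    (n m : ℕ) (hn : n = Fintype.card V) (hm : m = Fintype.card E) :
    coneMesh src tgt = 1 + (coneY src tgt)ᵀ * coneY src tgt
    ∧ coneY src tgt * (coneY src tgt)ᵀ = LapDegAdj src tgt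
    ∧ Polynomial.X ^ n * (coneMesh src tgt - 1).charpoly
        = Polynomial.X ^ m * (LapDegAdj src tgt).charpoly
    ∧ ∀ μ : ℂ, μ ≠ 0 →
        (μ ∈ spectrum ℂ ((coneMesh src tgt - 1).map (Int.cast : ℤ → ℂ)) ↔
          μ ∈ spectrum ℂ ((LapDegAdj src tgt).map (Int.cast : ℤ → ℂ))) := by
  have hmesh := coneMesh_eq_one_add_transpose_mul src tgt
  have hlap := coneY_mul_transpose src tgt hloopfree
  have hcharpoly : Polynomial.X ^ n * (coneMesh src tgt - 1).charpoly
      = Polynomial.X ^ m * (LapDegAdj src tgt).charpoly := by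
    rw [hmesh, add_sub_cancel_left, ← hlap, hn, hm]
    exact charpoly_mul_comm' _ _
  exact ⟨hmesh, hlap, hcharpoly, fun μ hμ =>
    Matrix.mem_spectrum_map_iff_of_X_pow_mul_charpoly_eq (Int.castRingHom ℂ) hcharpoly hμ⟩

end Mesh
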